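/- Let w ∈ S_n, p ≤ ν < q with ℓ(w·t_{pq}) = ℓ(w)+1. Set a = #{r < p : w(r) > w(p)}, b = #{r < p : w(r) > w(q)}, c = #{p < r < q : w(r) > w(q)}. Then l_p(w·t_{pq}) = b, l_q(w·t_{pq}) = a + c + 1, and l_j(w·t_{pq}) = l_j(w) for all j ≠ p, q, where l_j(v) = #{i < j : v(i) > v(j)}. -/

import Mathlib

/-!
Both `ℓ(w)` and `ℓ(w t_{pq})` are the sums of their codes over `j < n`. Right multiplication by
`t_{pq}` does not change `l_j` for `j < p` or `j > q`, and comparing the remaining entries gives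
`ℓ(w t_{pq}) - ℓ(w) = ±1 + 2 (#{p < j < q : w(j) > w(p)} - #{p < j < q : w(j) > w(q)})`, where the
sign is that of `w(q) - w(p)`. Hence the length goes up by exactly one only if `w(p) < w(q)` and
no `w(j)` with `p < j < q` lies between them, and under this condition the codes of `w t_{pq}` are
read off directly.
-/

/-- The inversion number `ℓ(w) = #{i < j : w(i) > w(j)}`. -/
noncomputable def ell (w : Equiv.Perm ℕ) : ℕ :=
  Set.ncard {p : ℕ × ℕ | p.1 < p.2 ∧ w p.2 < w p.1}

/-- `l_j(v) = #{i < j : v(i) > v(j)}` (0-indexed). -/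
def code (v : Equiv.Perm ℕ) (j : ℕ) : ℕ :=
  ((Finset.range j).filter fun i => v j < v i).card

open Finset Equiv

lemma apply_lt_of_forall_le_apply_eq {n : ℕ} {v : Perm ℕ} (hv : ∀ i, n ≤ i → v i = i) {i : ℕ}
    (hi : i < n) : v i < n := by
  by_contra! h
  have := v.injective (hv _ h)
  omega

lemma ell_eq_sum_code {n : ℕ} {v : Perm ℕ} (hv : ∀ i, n ≤ i → v i = i) :
    ell v = ∑ j ∈ range n, code v j := by
  let flip : (Σ _ : ℕ, ℕ) ↪ ℕ × ℕ := ⟨fun x => (x.2, x.1), fun x y h => by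
    obtain ⟨a, b⟩ := x; obtain ⟨c, d⟩ := y; simp_all⟩
  have hinv : {x : ℕ × ℕ | x.1 < x.2 ∧ v x.2 < v x.1} =
      ((range n).sigma fun j => (range j).filter fun i => v j < v i).map flip := by
    ext ⟨i, j⟩
    simp only [Set.mem_ofPred_eq, coe_map, Set.mem_image, mem_coe, mem_sigma, mem_range,
      mem_filter]
    constructor
    · rintro ⟨hij, hvij⟩
      refine ⟨⟨j, i⟩, ⟨?_, hij, hvij⟩, rfl⟩
      show j < n
      by_contra! hj
      rcases lt_or_ge i n with hi | hi
      · have := apply_lt_of_forall_le_apply_eq hv hi; have := hv j hj; omega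
      · have := hv i hi; have := hv j hj; omega
    · rintro ⟨⟨j', i'⟩, ⟨-, hij, hvij⟩, h⟩
      simp only [flip] at h
      obtain ⟨rfl, rfl⟩ := h
      exact ⟨hij, hvij⟩
  rw [ell, hinv, Set.ncard_coe_finset, card_map, card_sigma]
  rfl

section

variable {α : Type*} [DecidableEq α] (w : Perm α) {p q i : α}

lemma mul_swap_apply_left : (w * swap p q) p = w q := by simp [Perm.mul_apply]

lemma mul_swap_apply_right : (w * swap p q) q = w p := by simp [Perm.mul_apply]

lemma mul_swap_apply_of_ne (hp : i ≠ p) (hq : i ≠ q) : (w * swap p q) i = w i := by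
  rw [Perm.mul_apply, swap_apply_of_ne_of_ne hp hq]

end

section MulSwap

variable (w : Perm ℕ) {p q j : ℕ}

lemma code_mul_swap_of_lt (hp : j < p) (hq : j < q) : code (w * swap p q) j = code w j := by
  refine congrArg card <| filter_congr fun i hi => ?_
  rw [mem_range] at hi
  rw [mul_swap_apply_of_ne w (by omega) (by omega), mul_swap_apply_of_ne w (by omega) (by omega)]

lemma code_mul_swap_of_gt (hp : p < j) (hq : q < j) : code (w * swap p q) j = code w j := by
  refine card_equiv (swap p q) fun i => ?_
  have : swap p q i < j ↔ i < j := by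
    rcases eq_or_ne i p with rfl | hip
    · simp [hp, hq]
    rcases eq_or_ne i q with rfl | hiq
    · simp [hp, hq]
    · rw [swap_apply_of_ne_of_ne hip hiq]
  simp [mul_swap_apply_of_ne w (show j ≠ p by omega) (show j ≠ q by omega), Perm.mul_apply, this]

lemma code_mul_swap_left (hpq : p < q) :
    code (w * swap p q) p = ((range p).filter fun r => w q < w r).card := by
  refine congrArg card <| filter_congr fun i hi => ?_
  rw [mem_range] at hi
  rw [mul_swap_apply_left, mul_swap_apply_of_ne w (by omega) (by omega)]

lemma code_eq_add_of_lt (u : Perm ℕ) (hpq : p < q) :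
    code u q = (if u q < u p then 1 else 0)
      + ((range p).filter fun i => u q < u i).card
      + ((Ioo p q).filter fun i => u q < u i).card := by
  have hr : range q = insert p (range p ∪ Ioo p q) := by
    ext i; simp only [mem_insert, mem_union, mem_range, mem_Ioo]; omega
  have hdisj : Disjoint (range p) (Ioo p q) := by
    rw [disjoint_left]; intro i hi hi'
    rw [mem_range] at hi; rw [mem_Ioo] at hi'; omega
  have hnp : p ∉ range p ∪ Ioo p q := by
    simp only [mem_union, mem_range, mem_Ioo]; omega
  rw [code, card_filter, hr, sum_insert hnp, sum_union hdisj, ← card_filter, ← card_filter,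
    add_assoc]

lemma code_mul_swap_right (hpq : p < q) :
    code (w * swap p q) q = (if w p < w q then 1 else 0)
      + ((range p).filter fun i => w p < w i).card
      + ((Ioo p q).filter fun i => w p < w i).card := by
  have hlow : ((range p).filter fun i => w p < (w * swap p q) i)
      = (range p).filter fun i => w p < w i := filter_congr fun i hi => by
    rw [mem_range] at hi; rw [mul_swap_apply_of_ne w (by omega) (by omega)]
  have hmid : ((Ioo p q).filter fun i => w p < (w * swap p q) i)
      = (Ioo p q).filter fun i => w p < w i := filter_congr fun i hi => by
    rw [mem_Ioo] at hi; rw [mul_swap_apply_of_ne w (by omega) (by omega)]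
  rw [code_eq_add_of_lt _ hpq, mul_swap_apply_left, mul_swap_apply_right, hlow, hmid]

lemma code_mul_swap_add_of_mem_Ioo (hp : p < j) (hq : j < q) :
    code (w * swap p q) j + (if w j < w p then 1 else 0)
      = code w j + (if w j < w q then 1 else 0) := by
  have hsplit (v : Perm ℕ) : code v j = (if v j < v p then 1 else 0)
      + ∑ i ∈ (range j).erase p, if v j < v i then 1 else 0 := by
    rw [code, card_filter, ← add_sum_erase _ _ (mem_range.mpr hp)]
  have hrest : ∑ i ∈ (range j).erase p, (if (w * swap p q) j < (w * swap p q) i then 1 else 0)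
      = ∑ i ∈ (range j).erase p, if w j < w i then 1 else 0 := by
    refine sum_congr rfl fun i hi => ?_
    rw [mem_erase, mem_range] at hi
    rw [mul_swap_apply_of_ne w (by omega) (by omega), mul_swap_apply_of_ne w hi.1 (by omega)]
  rw [hsplit, hsplit w, hrest, mul_swap_apply_left, mul_swap_apply_of_ne w (by omega) (by omega)]
  omega

end MulSwap

lemma ell_mul_swap_eq {n : ℕ} {w : Perm ℕ} (hw : ∀ i, n ≤ i → w i = i) {p q : ℕ} (hpq : p < q)
    (hqn : q < n) :
    (ell (w * swap p q) : ℤ) = ell w + ((if w p < w q then 1 else 0) - if w q < w p then 1 else 0)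
      + 2 * ((((Ioo p q).filter fun j => w p < w j).card : ℤ)
        - ((Ioo p q).filter fun j => w q < w j).card) := by
  have hW : ∀ i, n ≤ i → (w * swap p q) i = i := fun i hi => by
    rw [mul_swap_apply_of_ne w (by omega) (by omega), hw i hi]
  have hsub : insert p (insert q (Ioo p q)) ⊆ range n := by
    intro x hx
    simp only [mem_insert, mem_Ioo] at hx
    rw [mem_range]; omega
  have hzero : ∀ j ∈ range n, j ∉ insert p (insert q (Ioo p q)) →
      (code (w * swap p q) j : ℤ) - code w j = 0 := by
    intro j _ hj
    simp only [mem_insert, mem_Ioo, not_or] at hj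
    rcases lt_or_gt_of_ne hj.1 with h | h
    · rw [code_mul_swap_of_lt w h (by omega), sub_self]
    · rw [code_mul_swap_of_gt w h (by omega), sub_self]
  have hmid : ∀ j ∈ Ioo p q, (code (w * swap p q) j : ℤ) - code w j
      = (if w p < w j then 1 else 0) - if w q < w j then 1 else 0 := by
    intro j hj
    rw [mem_Ioo] at hj
    have hjp : w j ≠ w p := w.injective.ne (by omega)
    have hjq : w j ≠ w q := w.injective.ne (by omega)
    have := code_mul_swap_add_of_mem_Ioo w hj.1 hj.2
    split_ifs at this ⊢ <;> omega
  have hp : p ∉ insert q (Ioo p q) := by simp only [mem_insert, mem_Ioo]; omega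
  have hq : q ∉ Ioo p q := by simp only [mem_Ioo]; omega
  rw [ell_eq_sum_code hW, ell_eq_sum_code hw, Nat.cast_sum, Nat.cast_sum, add_assoc,
    ← sub_eq_iff_eq_add', ← sum_sub_distrib, ← sum_subset hsub hzero, sum_insert hp,
    sum_insert hq, sum_congr rfl hmid, sum_sub_distrib, sum_boole, sum_boole,
    code_mul_swap_left w hpq, code_mul_swap_right w hpq, code_eq_add_of_lt w hpq]
  push_cast [code]
  ring

lemma lt_and_forall_mem_Ioo_of_ell_mul_swap_eq_succ {n : ℕ} {w : Perm ℕ}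
    (hw : ∀ i, n ≤ i → w i = i) {p q : ℕ} (hpq : p < q) (hqn : q < n)
    (hl : ell (w * swap p q) = ell w + 1) :
    w p < w q ∧ ∀ j ∈ Ioo p q, w j < w p ∨ w q < w j := by
  have hform := ell_mul_swap_eq hw hpq hqn
  rw [hl] at hform
  push_cast at hform
  rcases lt_or_gt_of_ne (w.injective.ne hpq.ne) with hlt | hgt
  · have hsub : ((Ioo p q).filter fun j => w q < w j) ⊆ (Ioo p q).filter fun j => w p < w j :=
      monotone_filter_right _ fun _ _ h => hlt.trans h
    rw [if_pos hlt, if_neg hlt.not_gt] at hform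
    have hcard := eq_of_subset_of_card_le hsub (by omega)
    refine ⟨hlt, fun j hj => ?_⟩
    have hjp : w j ≠ w p := w.injective.ne (by rw [mem_Ioo] at hj; omega)
    by_contra! hbetween
    have : j ∈ (Ioo p q).filter fun j => w p < w j := mem_filter.2 ⟨hj, hbetween.1.lt_of_ne' hjp⟩
    rw [← hcard, mem_filter] at this
    exact absurd this.2 hbetween.2.not_gt
  · have hsub : ((Ioo p q).filter fun j => w p < w j) ⊆ (Ioo p q).filter fun j => w q < w j :=
      monotone_filter_right _ fun _ _ h => hgt.trans h
    have := card_le_card hsub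
    rw [if_neg hgt.not_gt, if_pos hgt] at hform
    omega

/-- For `w ∈ S_n`, `p ≤ ν < q` with `ℓ(w t_{pq}) = ℓ(w) + 1`, setting
`a = #{r < p : w(r) > w(p)}`, `b = #{r < p : w(r) > w(q)}`,
`c = #{p < r < q : w(r) > w(q)}`, we have `l_p(w t_{pq}) = b`,
`l_q(w t_{pq}) = a + c + 1`, and `l_j(w t_{pq}) = l_j(w)` for `j ≠ p, q`. -/
theorem stmt16 (n : ℕ) (w : Equiv.Perm ℕ) (hw : ∀ i, n ≤ i → w i = i)
    (ν p q : ℕ) (hpν : p ≤ ν) (hνq : ν < q) (hqn : q < n)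
    (hl : ell (w * Equiv.swap p q) = ell w + 1) :
    code (w * Equiv.swap p q) p = ((Finset.range p).filter fun r => w q < w r).card ∧
    code (w * Equiv.swap p q) q
      = ((Finset.range p).filter fun r => w p < w r).card
        + ((Finset.Ioo p q).filter fun r => w q < w r).card + 1 ∧
    ∀ j, j ≠ p → j ≠ q → code (w * Equiv.swap p q) j = code w j := by
  have hpq : p < q := hpν.trans_lt hνq
  obtain ⟨hwpq, hgap⟩ := lt_and_forall_mem_Ioo_of_ell_mul_swap_eq_succ hw hpq hqn hl
  have hIoo : ((Ioo p q).filter fun r => w p < w r) = (Ioo p q).filter fun r => w q < w r :=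
    filter_congr fun j hj => ⟨fun h => (hgap j hj).resolve_left h.not_gt, hwpq.trans⟩
  refine ⟨code_mul_swap_left w hpq, ?_, fun j hjp hjq => ?_⟩
  · rw [code_mul_swap_right w hpq, if_pos hwpq, hIoo]
    ring
  rcases lt_or_gt_of_ne hjp with hjp | hpj
  · exact code_mul_swap_of_lt w hjp (hjp.trans hpq)
  rcases lt_or_gt_of_ne hjq with hjq | hqj
  · have hsame : w j < w p ↔ w j < w q := ⟨fun h => h.trans hwpq,
      fun h => (hgap j (mem_Ioo.2 ⟨hpj, hjq⟩)).resolve_right h.not_gt⟩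
    have := code_mul_swap_add_of_mem_Ioo w hpj hjq
    rw [if_congr hsame rfl rfl] at this
    omega
  · exact code_mul_swap_of_gt w (hpq.trans hqj) hqj
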